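/- If G is a 2-connected plane graph and C is a cycle in G, then the plane subgraph of G bounded by C (the subgraph induced by the edges lying on C together with those strictly inside its interior) is also 2-connected. -/

import Mathlib

open scoped Classical

/-- A topological drawing of a graph in the plane: vertices at distinct points,
edges as simple arcs meeting only at shared endpoints and avoiding other vertices. -/
structure Drawing {V : Type*} (G : SimpleGraph V) where
  pos : V → ℝ × ℝ
  inj : Function.Injective pos
  arc : Sym2 V → ℝ → ℝ × ℝ
  contOn : ∀ e ∈ G.edgeSet, ContinuousOn (arc e) (Set.Icc 0 1)
  injOn : ∀ e ∈ G.edgeSet, Set.InjOn (arc e) (Set.Icc 0 1)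
  ends : ∀ u v : V, G.Adj u v →
    (arc s(u, v) 0 = pos u ∧ arc s(u, v) 1 = pos v) ∨
    (arc s(u, v) 0 = pos v ∧ arc s(u, v) 1 = pos u)
  interMeet : ∀ e ∈ G.edgeSet, ∀ f ∈ G.edgeSet, e ≠ f →
    ∀ s ∈ Set.Icc (0:ℝ) 1, ∀ t ∈ Set.Icc (0:ℝ) 1,
      arc e s = arc f t → ∃ x : V, x ∈ e ∧ x ∈ f ∧ arc e s = pos x
  vertexMeet : ∀ e ∈ G.edgeSet, ∀ t ∈ Set.Ioo (0:ℝ) 1, ∀ x : V, arc e t ≠ pos x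

/-- A graph is planar if it admits a drawing in the plane. -/
def SimpleGraph.IsPlanar {V : Type*} (G : SimpleGraph V) : Prop := Nonempty (Drawing G)

/-- `G` contains a cycle of length exactly `k`. -/
def HasCycleLen {V : Type*} (G : SimpleGraph V) (k : ℕ) : Prop :=
  ∃ (v : V) (w : G.Walk v v), w.IsCycle ∧ w.length = k

/-- `G` contains a cycle of length at least `k`. -/
def HasCycleLenGe {V : Type*} (G : SimpleGraph V) (k : ℕ) : Prop :=
  ∃ (v : V) (w : G.Walk v v), w.IsCycle ∧ k ≤ w.length

/-- `G` contains two vertex-disjoint cycles, each of length `k` (a copy of `2C_k`). -/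
def HasTwoDisjointCyclesLen {V : Type*} (G : SimpleGraph V) (k : ℕ) : Prop :=
  ∃ (u v : V) (w₁ : G.Walk u u) (w₂ : G.Walk v v),
    w₁.IsCycle ∧ w₂.IsCycle ∧ w₁.length = k ∧ w₂.length = k ∧
    ∀ x, x ∈ w₁.support → x ∉ w₂.support

/-- Planar Turán number of the cycle `C_k`. -/
noncomputable def exPC (n k : ℕ) : ℕ :=
  sSup {m | ∃ G : SimpleGraph (Fin n), G.IsPlanar ∧ ¬ HasCycleLen G k ∧ m = G.edgeSet.ncard}

/-- Planar Turán number of `2C_k` (two disjoint `k`-cycles). -/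
noncomputable def exP2C (n k : ℕ) : ℕ :=
  sSup {m | ∃ G : SimpleGraph (Fin n), G.IsPlanar ∧ ¬ HasTwoDisjointCyclesLen G k ∧
    m = G.edgeSet.ncard}

/-- The graph induced by `G` on the vertex set `S` is 2-connected. -/
def TwoConnectedOn {V : Type*} (G : SimpleGraph V) (S : Set V) : Prop :=
  3 ≤ S.ncard ∧ (G.induce S).Connected ∧ ∀ v ∈ S, (G.induce (S \ {v})).Connected

/-- `B` has no cut vertex (with respect to `G` restricted to `B`). -/
def NoCutVertexOn {V : Type*} (G : SimpleGraph V) (B : Set V) : Prop :=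
  ∀ v ∈ B, (G.induce (B \ {v})).Connected

/-- `B` is a block of the graph induced by `G` on `A`: a maximal subset of `A`
inducing a connected subgraph without cut vertices. -/
def IsBlockOn {V : Type*} (G : SimpleGraph V) (A B : Set V) : Prop :=
  B ⊆ A ∧ B.Nonempty ∧ (G.induce B).Connected ∧ NoCutVertexOn G B ∧
    ∀ B', B ⊆ B' → B' ⊆ A → (G.induce B').Connected → NoCutVertexOn G B' → B' = B

/-- `B` is a block of `G`. -/
def IsBlock {V : Type*} (G : SimpleGraph V) (B : Set V) : Prop := IsBlockOn G Set.univ B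

/-- `v` is a cut vertex of `G`. -/
def IsCutVertex {V : Type*} (G : SimpleGraph V) (v : V) : Prop :=
  G.Connected ∧ ¬ (G.induce ({v}ᶜ : Set V)).Connected

/-- The list of (unordered) edges of the closed walk determined by a cyclic list. -/
def walkEdges {V : Type*} (l : List V) : List (Sym2 V) :=
  (l.zip (l.rotate 1)).map fun p => s(p.1, p.2)

/-- A combinatorial plane graph: a connected finite graph together with a family of faces,
each given by its boundary closed walk, such that each edge lies on exactly two face-walk
positions and Euler's formula holds; one face is designated as the outer face. -/
structure PlaneGraph (V : Type*) where
  graph : SimpleGraph V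
  vfin : Finite V
  conn : graph.Connected
  F : Type
  ffin : Finite F
  boundary : F → List V
  outer : F
  closedWalk : ∀ f : F, ∀ e ∈ walkEdges (boundary f), e ∈ graph.edgeSet
  edgeTwice : ∀ e ∈ graph.edgeSet, (∑ᶠ f : F, (walkEdges (boundary f)).count e) = 2
  euler : Nat.card V + Nat.card F = graph.edgeSet.ncard + 2

/-- A hole of a plane graph: an inner face whose boundary has length at least 4. -/
def PlaneGraph.IsHole {V : Type*} (P : PlaneGraph V) (f : P.F) : Prop :=
  f ≠ P.outer ∧ 4 ≤ (P.boundary f).length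

/-- The number `m(G)` of missing edges of a plane graph: the number of chords of holes
needed to turn it into a near-triangulation. -/
noncomputable def PlaneGraph.missing {V : Type*} (P : PlaneGraph V) : ℕ :=
  ∑ᶠ f : P.F, if P.IsHole f then (P.boundary f).length - 3 else 0

/-- A near-triangulation: a 2-connected plane graph all of whose inner faces are 3-faces. -/
def PlaneGraph.IsNearTriangulation {V : Type*} (P : PlaneGraph V) : Prop :=
  TwoConnectedOn P.graph Set.univ ∧ ∀ f : P.F, f ≠ P.outer → (P.boundary f).length = 3

/-- A circuit graph: a 2-connected plane graph whose outer face is bounded by a cycle `C`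
such that for every 2-cut `S`, every component of `G - S` contains a vertex of `C`. -/
def PlaneGraph.IsCircuitGraph {V : Type*} (P : PlaneGraph V) : Prop :=
  TwoConnectedOn P.graph Set.univ ∧ (P.boundary P.outer).Nodup ∧
    3 ≤ (P.boundary P.outer).length ∧
    ∀ S : Set V, S.ncard = 2 → ¬ (P.graph.induce (Sᶜ : Set V)).Connected →
      ∀ v : (Sᶜ : Set V), ∃ w : (Sᶜ : Set V),
        (P.graph.induce (Sᶜ : Set V)).Reachable v w ∧ (w : V) ∈ P.boundary P.outer

/-- The point set of a drawing restricted to the vertex set `S` and edge set `E`. -/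
def imageOn {V : Type*} {G : SimpleGraph V} (D : Drawing G) (S : Set V) (E : Set (Sym2 V)) :
    Set (ℝ × ℝ) :=
  (D.pos '' S) ∪ ⋃ e ∈ E, D.arc e '' Set.Icc 0 1

/-- The outer (unbounded) region of the drawing restricted to `S` and `E`. -/
def outerRegionOn {V : Type*} {G : SimpleGraph V} (D : Drawing G) (S : Set V)
    (E : Set (Sym2 V)) : Set (ℝ × ℝ) :=
  {x | x ∉ imageOn D S E ∧ ¬ Bornology.IsBounded (connectedComponentIn (imageOn D S E)ᶜ x)}

/-!
Let `S` be the set of vertices lying on `C` or drawn inside `C`. The open arc of an edge avoids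
the drawing of `C` unless the edge is on `C`, and it is connected with its endpoints in their
closure, so an edge leaving a vertex strictly inside `C` lies, together with its other endpoint,
in the same bounded component of the complement of `C`. Hence for every vertex `x`, a walk in
`G - x` from a vertex of the bounded subgraph `H` to `C` is a walk of `H - x` up to its first
vertex on `C`; since `C - x` is connected, so is `H - x`.
-/

namespace SimpleGraph

variable {V : Type*} {G : SimpleGraph V}

lemma Walk.mem_support_of_start_mem_support {u v z : V} (p : G.Walk u v) (hu : u ∈ G.support)
    (hz : z ∈ p.support) : z ∈ G.support := by
  cases p with
  | nil => simp_all
  | cons => exact mem_support_of_mem_walk_support _ Walk.not_nil_cons hz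

lemma exists_walk_of_reachable_induce {s : Set V} {u v : V} {hu : u ∈ s} {hv : v ∈ s}
    (h : (G.induce s).Reachable ⟨u, hu⟩ ⟨v, hv⟩) :
    ∃ p : G.Walk u v, ∀ z ∈ p.support, z ∈ s := by
  obtain ⟨p⟩ := h
  have hp : ∀ z ∈ (p.map (Embedding.induce s).toHom).support, z ∈ s := by
    simp only [Walk.support_map, List.mem_map]
    rintro _ ⟨z, -, rfl⟩
    exact z.2
  exact ⟨_, hp⟩

lemma connected_induce_of_forall_walk {s : Set V} {u : V} (hu : u ∈ s)
    (h : ∀ v ∈ s, ∃ p : G.Walk u v, ∀ z ∈ p.support, z ∈ s) : (G.induce s).Connected :=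
  (connected_iff_exists_forall_reachable _).mpr
    ⟨⟨u, hu⟩, fun ⟨v, hv⟩ => let ⟨p, hp⟩ := h v hv; ⟨p.induce s hp⟩⟩

lemma connected_induce_support_of_diff {x : V} (hx : x ∈ G.support)
    (h : (G.induce (G.support \ {x})).Connected) : (G.induce G.support).Connected := by
  obtain ⟨y, hxy⟩ := (mem_support G).mp hx
  have hy : y ∈ G.support \ {x} := ⟨⟨x, hxy.symm⟩, hxy.ne'⟩
  have := connected_induce_union h.preconnected Preconnected.of_subsingleton hy
    (Set.mem_singleton x) hxy.symm
  rwa [Set.sdiff_union_of_subset (Set.singleton_subset_iff.mpr hx)] at this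

lemma Walk.IsPath.connected_induce_support_diff_end {a b : V} {p : G.Walk a b} (hp : p.IsPath)
    (hab : a ≠ b) : (G.induce ({z | z ∈ p.support} \ {b})).Connected :=
  connected_induce_of_forall_walk ⟨p.start_mem_support, hab⟩ fun y ⟨hy, hyb⟩ =>
    ⟨p.takeUntil y hy, fun z hz => ⟨p.support_takeUntil_subset_support hy hz, by
      rintro rfl; exact Walk.endpoint_notMem_support_takeUntil hp hy (Ne.symm hyb) hz⟩⟩

lemma Walk.IsCycle.connected_induce_support_diff {v : V} {c : G.Walk v v} (hc : c.IsCycle)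
    (x : V) : (G.induce ({z | z ∈ c.support} \ {x})).Connected := by
  by_cases hx : x ∈ c.support
  · have hc' : (c.rotate x hx).IsCycle := hc.rotate hx
    have hsupp : {z | z ∈ c.support} \ {x} = {z | z ∈ (c.rotate x hx).tail.support} \ {x} := by
      ext z
      simp only [Set.mem_sdiff, Set.mem_ofPred_eq, Set.mem_singleton_iff,
        ← c.mem_support_rotate_iff x hx, ← Walk.cons_support_tail hc'.not_nil, List.mem_cons]
      tauto
    rw [hsupp]
    exact hc'.isPath_tail.connected_induce_support_diff_end
      ((c.rotate x hx).adj_snd hc'.not_nil).ne'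
  · rw [Set.sdiff_singleton_eq_self (show x ∉ {z | z ∈ c.support} from hx)]
    exact c.connected_induce_support

lemma Walk.IsCycle.three_le_ncard_support {v : V} {c : G.Walk v v} (hc : c.IsCycle) :
    3 ≤ {z | z ∈ c.support}.ncard := by
  classical
  have htail : {z | z ∈ c.support} = ↑c.support.tail.toFinset := by
    ext z
    rw [Set.mem_ofPred_eq, List.coe_toFinset, Set.mem_ofPred_eq]
    constructor
    · intro hz
      rw [← Walk.cons_tail_support] at hz
      rcases List.mem_cons.mp hz with rfl | hz
      exacts [Walk.end_mem_tail_support hc.not_nil, hz]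
    · exact List.mem_of_mem_tail
  rw [htail, Set.ncard_coe_finset, List.toFinset_card_of_nodup hc.support_nodup]
  simpa using hc.three_le_length

section EnclosedSubgraph

variable {H : SimpleGraph V} {v : V} {c : H.Walk v v} {S : Set V}

lemma exists_walk_to_cycle
    (hstep : ∀ ⦃a b⦄, G.Adj a b → a ∈ S → a ∉ c.support → H.Adj a b ∧ b ∈ S) :
    ∀ {a b : V} (q : G.Walk a b), a ∈ S → b ∈ c.support →
      ∃ d ∈ c.support, ∃ p : H.Walk a d, p.support ⊆ q.support := by
  intro a b q ha hb
  induction q with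
  | nil => exact ⟨_, hb, .nil, List.Subset.refl _⟩
  | @cons a a' b hadj q ih =>
    by_cases hac : a ∈ c.support
    · exact ⟨a, hac, .nil, by simp⟩
    obtain ⟨hH, ha'⟩ := hstep hadj ha hac
    obtain ⟨d, hd, p, hp⟩ := ih ha' hb
    exact ⟨d, hd, .cons hH p, by simpa using List.cons_subset_cons a hp⟩

lemma connected_induce_support_diff_of_isCycle (hc : c.IsCycle) (hHS : H.support ⊆ S)
    (hstep : ∀ ⦃a b⦄, G.Adj a b → a ∈ S → a ∉ c.support → H.Adj a b ∧ b ∈ S)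
    {x : V} (hG : (G.induce (Set.univ \ {x})).Connected) :
    (H.induce (H.support \ {x})).Connected := by
  have hcyc := hc.connected_induce_support_diff x
  obtain ⟨⟨b, hb⟩⟩ := hcyc.nonempty
  have hsub : {z | z ∈ c.support} \ {x} ⊆ H.support \ {x} :=
    Set.sdiff_subset_sdiff_left fun z hz => mem_support_of_mem_walk_support c hc.not_nil hz
  refine (connected_iff_exists_forall_reachable _).mpr ⟨⟨b, hsub hb⟩, ?_⟩
  rintro ⟨u, hu⟩
  obtain ⟨q, hq⟩ := exists_walk_of_reachable_induce
    (hG.preconnected ⟨u, trivial, hu.2⟩ ⟨b, trivial, hb.2⟩)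
  obtain ⟨d, hd, p, hp⟩ := exists_walk_to_cycle hstep q (hHS hu.1) hb.1
  have hdx : d ∈ {z | z ∈ c.support} \ {x} := ⟨hd, (hq d (hp p.end_mem_support)).2⟩
  have hbd : (H.induce (H.support \ {x})).Reachable ⟨b, hsub hb⟩ ⟨d, hsub hdx⟩ :=
    (hcyc.preconnected ⟨b, hb⟩ ⟨d, hdx⟩).map (induceHomOfLE _ hsub).toHom
  have hud : (H.induce (H.support \ {x})).Reachable ⟨u, hu⟩ ⟨d, hsub hdx⟩ :=
    ⟨p.induce (H.support \ {x}) fun z hz =>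
      ⟨p.mem_support_of_start_mem_support hu.1 hz, (hq z (hp hz)).2⟩⟩
  exact hbd.trans hud.symm

-- `S` plays the role of the set of vertices on or inside the cycle `c`.
theorem twoConnectedOn_support_of_isCycle [Finite V] (hc : c.IsCycle) (hHS : H.support ⊆ S)
    (hstep : ∀ ⦃a b⦄, G.Adj a b → a ∈ S → a ∉ c.support → H.Adj a b ∧ b ∈ S)
    (hG : TwoConnectedOn G Set.univ) : TwoConnectedOn H H.support := by
  have hdel (x : V) : (H.induce (H.support \ {x})).Connected :=
    connected_induce_support_diff_of_isCycle hc hHS hstep (hG.2.2 x trivial)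
  have hcH : {z | z ∈ c.support} ⊆ H.support := fun z hz =>
    mem_support_of_mem_walk_support c hc.not_nil hz
  exact ⟨hc.three_le_ncard_support.trans (Set.ncard_le_ncard hcH),
    connected_induce_support_of_diff (hcH c.start_mem_support) (hdel v), fun x _ => hdel x⟩

end EnclosedSubgraph

end SimpleGraph

lemma connectedComponentIn_eq_of_mem_closure {X : Type*} [TopologicalSpace X]
    [LocallyConnectedSpace X] {U S : Set X} {p q : X} (hU : IsOpen U) (hSU : S ⊆ U)
    (hS : IsPreconnected S) (hp : p ∈ U) (hpS : p ∈ closure S) (hq : q ∈ S) :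
    connectedComponentIn U p = connectedComponentIn U q := by
  obtain ⟨r, hrp, hrS⟩ :=
    mem_closure_iff.mp hpS _ hU.connectedComponentIn (mem_connectedComponentIn hp)
  rw [connectedComponentIn_eq hrp]
  exact connectedComponentIn_eq (hS.subset_connectedComponentIn hrS hSU hq)

namespace Drawing

open SimpleGraph Set

variable {V : Type*} {G : SimpleGraph V} (D : Drawing G)

def walkImage {u v : V} (p : G.Walk u v) : Set (ℝ × ℝ) :=
  ⋃ e ∈ p.edges, D.arc e '' Icc 0 1

def enclosed {v : V} (c : G.Walk v v) : Set (ℝ × ℝ) :=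
  {x | x ∉ D.walkImage c ∧ Bornology.IsBounded (connectedComponentIn (D.walkImage c)ᶜ x)}

def enclosedSubgraph {v : V} (c : G.Walk v v) : SimpleGraph V :=
  fromEdgeSet {e | e ∈ c.edges ∨ (e ∈ G.edgeSet ∧ D.arc e '' Ioo 0 1 ⊆ D.enclosed c)}

lemma mem_of_arc_eq_pos {e : Sym2 V} (he : e ∈ G.edgeSet) {t : ℝ} (ht : t ∈ Icc 0 1) {u : V}
    (h : D.arc e t = D.pos u) : u ∈ e := by
  induction e using Sym2.ind with
  | _ a b =>
    rcases ht.1.eq_or_lt with rfl | h0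
    · rcases D.ends a b he with ⟨h', -⟩ | ⟨h', -⟩ <;> simp [D.inj (h.symm.trans h')]
    rcases ht.2.eq_or_lt with rfl | h1
    · rcases D.ends a b he with ⟨-, h'⟩ | ⟨-, h'⟩ <;> simp [D.inj (h.symm.trans h')]
    exact absurd h (D.vertexMeet _ he t ⟨h0, h1⟩ u)

variable {u v : V} (p : G.Walk u v)

lemma isCompact_walkImage : IsCompact (D.walkImage p) :=
  p.edges.finite_toSet.isCompact_biUnion fun e he =>
    isCompact_Icc.image_of_continuousOn (D.contOn e (p.edges_subset_edgeSet he))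

variable {p}

lemma pos_notMem_walkImage {z : V} (hz : z ∉ p.support) : D.pos z ∉ D.walkImage p := by
  simp only [walkImage, mem_iUnion, mem_image, not_exists, not_and]
  intro e he t ht h
  exact hz (p.mem_support_of_mem_edges he (D.mem_of_arc_eq_pos (p.edges_subset_edgeSet he) ht h))

lemma arc_Ioo_subset_compl_walkImage {e : Sym2 V} (he : e ∈ G.edgeSet) (hep : e ∉ p.edges) :
    D.arc e '' Ioo 0 1 ⊆ (D.walkImage p)ᶜ := by
  rintro _ ⟨t, ht, rfl⟩ hmem
  simp only [walkImage, mem_iUnion, mem_image] at hmem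
  obtain ⟨e', he', s, hs, h⟩ := hmem
  obtain ⟨z, -, -, hz⟩ := D.interMeet e he e' (p.edges_subset_edgeSet he')
    (fun hee' => hep (hee' ▸ he')) t (Ioo_subset_Icc_self ht) s hs h.symm
  exact D.vertexMeet e he t ht z hz

lemma pos_mem_closure_arc_Ioo {a b : V} (hadj : G.Adj a b) :
    D.pos a ∈ closure (D.arc s(a, b) '' Ioo 0 1) := by
  have hcl : D.arc s(a, b) '' Icc 0 1 ⊆ closure (D.arc s(a, b) '' Ioo 0 1) := by
    rw [← closure_Ioo zero_ne_one]
    exact ContinuousOn.image_closure (by rw [closure_Ioo zero_ne_one]; exact D.contOn _ hadj)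
  rcases D.ends a b hadj with ⟨h, -⟩ | ⟨-, h⟩
  · exact hcl ⟨0, left_mem_Icc.2 zero_le_one, h⟩
  · exact hcl ⟨1, right_mem_Icc.2 zero_le_one, h⟩

lemma connectedComponentIn_pos_eq_of_mem_arc {a b : V} (hadj : G.Adj a b) (ha : a ∉ p.support)
    {q : ℝ × ℝ} (hq : q ∈ D.arc s(a, b) '' Ioo 0 1) :
    connectedComponentIn (D.walkImage p)ᶜ (D.pos a) = connectedComponentIn (D.walkImage p)ᶜ q :=
  connectedComponentIn_eq_of_mem_closure (D.isCompact_walkImage p).isClosed.isOpen_compl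
    (D.arc_Ioo_subset_compl_walkImage hadj fun h => ha (p.fst_mem_support_of_mem_edges h))
    (isPreconnected_Ioo.image _ ((D.contOn _ hadj).mono Ioo_subset_Icc_self))
    (D.pos_notMem_walkImage ha) (D.pos_mem_closure_arc_Ioo hadj) hq

variable {c : G.Walk v v}

lemma pos_mem_enclosed_iff {a b : V} (hadj : G.Adj a b) (ha : a ∉ c.support) :
    D.pos a ∈ D.enclosed c ↔ D.arc s(a, b) '' Ioo 0 1 ⊆ D.enclosed c := by
  constructor
  · intro h q hq
    refine ⟨D.arc_Ioo_subset_compl_walkImage hadj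
      (fun h => ha (c.fst_mem_support_of_mem_edges h)) hq, ?_⟩
    rw [← D.connectedComponentIn_pos_eq_of_mem_arc hadj ha hq]
    exact h.2
  · intro h
    have hq : D.arc s(a, b) (1 / 2) ∈ D.arc s(a, b) '' Ioo 0 1 := ⟨1 / 2, by norm_num, rfl⟩
    refine ⟨D.pos_notMem_walkImage ha, ?_⟩
    rw [D.connectedComponentIn_pos_eq_of_mem_arc hadj ha hq]
    exact (h hq).2

lemma support_enclosedSubgraph_subset :
    (D.enclosedSubgraph c).support ⊆ {u | u ∈ c.support ∨ D.pos u ∈ D.enclosed c} := by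
  intro u hu
  by_cases huc : u ∈ c.support
  · exact Or.inl huc
  obtain ⟨y, hy⟩ := (mem_support _).mp hu
  rw [enclosedSubgraph, fromEdgeSet_adj] at hy
  rcases hy.1 with he | ⟨hadj, harc⟩
  · exact absurd (c.fst_mem_support_of_mem_edges he) huc
  · exact Or.inr ((D.pos_mem_enclosed_iff hadj huc).mpr harc)

lemma enclosedSubgraph_adj_of_pos_mem_enclosed {a b : V} (hadj : G.Adj a b) (ha : a ∉ c.support)
    (hin : D.pos a ∈ D.enclosed c) :
    (D.enclosedSubgraph c).Adj a b ∧ (b ∈ c.support ∨ D.pos b ∈ D.enclosed c) := by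
  have harc := (D.pos_mem_enclosed_iff hadj ha).mp hin
  refine ⟨(fromEdgeSet_adj _).mpr ⟨Or.inr ⟨hadj, harc⟩, hadj.ne⟩, ?_⟩
  by_cases hb : b ∈ c.support
  · exact Or.inl hb
  · exact Or.inr ((D.pos_mem_enclosed_iff hadj.symm hb).mpr (Sym2.eq_swap (a := a) ▸ harc))

lemma edges_subset_edgeSet_enclosedSubgraph :
    ∀ e ∈ c.edges, e ∈ (D.enclosedSubgraph c).edgeSet :=
  fun e he => by
    rw [enclosedSubgraph, edgeSet_fromEdgeSet]
    exact ⟨Or.inl he, G.not_isDiag_of_mem_edgeSet (c.edges_subset_edgeSet he)⟩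

theorem twoConnectedOn_enclosedSubgraph [Finite V] (hG : TwoConnectedOn G univ) (hc : c.IsCycle) :
    TwoConnectedOn (D.enclosedSubgraph c) (D.enclosedSubgraph c).support := by
  refine twoConnectedOn_support_of_isCycle (hc.transfer D.edges_subset_edgeSet_enclosedSubgraph)
    D.support_enclosedSubgraph_subset (fun a b hadj ha hac => ?_) hG
  rw [Walk.support_transfer] at hac
  exact D.enclosedSubgraph_adj_of_pos_mem_enclosed hadj hac (ha.resolve_left hac)

end Drawing

/-- If `G` is a 2-connected plane graph and `C` is a cycle in `G`, then the plane subgraph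
bounded by `C` (edges of `C` together with everything strictly inside its interior)
is also 2-connected. -/
theorem stmt0 {V : Type} [Finite V] (G : SimpleGraph V) (D : Drawing G)
    (h2 : TwoConnectedOn G Set.univ) (v : V) (w : G.Walk v v) (hw : w.IsCycle) :
    TwoConnectedOn
      (SimpleGraph.fromEdgeSet
        {e | e ∈ w.edges ∨ (e ∈ G.edgeSet ∧
          D.arc e '' Set.Ioo 0 1 ⊆
            {x | x ∉ (⋃ e' ∈ w.edges, D.arc e' '' Set.Icc 0 1) ∧
              Bornology.IsBounded
                (connectedComponentIn (⋃ e' ∈ w.edges, D.arc e' '' Set.Icc 0 1)ᶜ x)})})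
      (SimpleGraph.fromEdgeSet
        {e | e ∈ w.edges ∨ (e ∈ G.edgeSet ∧
          D.arc e '' Set.Ioo 0 1 ⊆
            {x | x ∉ (⋃ e' ∈ w.edges, D.arc e' '' Set.Icc 0 1) ∧
              Bornology.IsBounded
                (connectedComponentIn (⋃ e' ∈ w.edges, D.arc e' '' Set.Icc 0 1)ᶜ x)})}).support
    := by
  exact D.twoConnectedOn_enclosedSubgraph h2 hw
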